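/- Fix an integer d ≥ 3, δ ∈ (0, 2/(d−2)], β > 0, ε ∈ (0,1) with 4^{d−2} ε^{(d−2)δ} ≤ 1/2, and a positive integer k. Let S_{k,ε} := k^{−d} Σ_{w ∈ ℤ^d ∩ [0,k)^d} Y_{ε,w} 1_{ρ_w < T_ε} (an average over exactly k^d lattice points). Then there is C = C(d) such that E[ (S_{k,ε} − E[ρ^{d−2}])² ] ≤ C ( k^{−d} Var( Y_{ε,0} 1_{ρ_0 < T_ε} ) + ε^4 ( E[ρ^{2(d−2)} 1_{ρ < T_ε}] )² + ε^{2(2/(d−2) − δ)β} ). -/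

import Mathlib

/-!
Let `S` be the average of the `k^d` independent copies of `Y = Yind d ε δ ρ`. The bias–variance
identity gives `E[(S - m)²] = Var Y / k^d + (E Y - m)²` with `m = E[ρ^{d-2}]`. For the bias: on
`{ρ < T}` the denominator of `Y` is at least `1/2`, so `0 ≤ Y - ρ^{d-2} ≤ 2·4^{d-2} ε² ρ^{2(d-2)}`;
on `{ρ ≥ T}` the Markov-type bound `ρ^{d-2} ≤ T^{-β} ρ^{d-2+β}` and `T^{-β} = ε^{(2/(d-2)-δ)β}`
control the truncated mass.
-/

open MeasureTheory ProbabilityTheory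

noncomputable section

/-- The truncation threshold `T_ε := ε^{−2/(d−2)+δ}`. -/
def Ttrunc (d : ℕ) (ε δ : ℝ) : ℝ := ε ^ (-(2 / ((d : ℝ) - 2)) + δ)

/-- `Y_{ε} 1_{ρ < T_ε}` as a function of the mark:
`x ↦ x^{d−2} / (1 − 4^{d−2} ε² x^{d−2})` on `{x < T_ε}`, `0` otherwise. -/
def Yind (d : ℕ) (ε δ : ℝ) : ℝ → ℝ :=
  Set.indicator {x | x < Ttrunc d ε δ}
    (fun x => x ^ ((d : ℝ) - 2) / (1 - 4 ^ ((d : ℝ) - 2) * ε ^ 2 * x ^ ((d : ℝ) - 2)))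

lemma div_one_sub_le_two_mul {y a : ℝ} (hy : 0 ≤ y) (ha : a ≤ 1 / 2) : y / (1 - a) ≤ 2 * y := by
  rw [div_le_iff₀ (by linarith)]
  nlinarith

lemma abs_div_one_sub_sub_le {y a : ℝ} (hy : 0 ≤ y) (ha₀ : 0 ≤ a) (ha : a ≤ 1 / 2) :
    |y / (1 - a) - y| ≤ 2 * a * y := by
  have hne : 1 - a ≠ 0 := by linarith
  have h : y / (1 - a) - y = a * y / (1 - a) := by
    rw [eq_div_iff hne, sub_mul, div_mul_cancel₀ _ hne]
    ring
  rw [h, abs_of_nonneg (by apply div_nonneg <;> nlinarith), div_le_iff₀ (by linarith)]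
  nlinarith [mul_nonneg ha₀ hy]

lemma rpow_le_one_add_rpow_add {x D β : ℝ} (hx : 0 ≤ x) (hD : 0 ≤ D) (hβ : 0 ≤ β) :
    x ^ D ≤ 1 + x ^ (D + β) := by
  rcases le_or_gt x 1 with h | h
  · linarith [Real.rpow_le_one hx h hD, Real.rpow_nonneg hx (D + β)]
  · linarith [Real.rpow_le_rpow_of_exponent_le h.le (le_add_of_nonneg_right hβ : D ≤ D + β)]

lemma indicator_le_rpow_neg_mul_rpow_add {T x D β : ℝ} (hT : 0 < T) (hx : 0 ≤ x) (hβ : 0 ≤ β) :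
    Set.indicator {y | T ≤ y} (fun y => y ^ D) x ≤ T ^ (-β) * x ^ (D + β) := by
  by_cases hxT : T ≤ x
  · rw [Set.indicator_of_mem (show x ∈ {y | T ≤ y} from hxT), Real.rpow_neg hT.le,
      Real.rpow_add (hT.trans_le hxT), inv_mul_eq_div, le_div_iff₀ (Real.rpow_pos_of_pos hT β)]
    exact mul_le_mul_of_nonneg_left (Real.rpow_le_rpow hT.le hxT hβ) (Real.rpow_nonneg hx D)
  · rw [Set.indicator_of_notMem (show x ∉ {y | T ≤ y} from hxT)]
    positivity

lemma add_sq_le_eight_mul_of_abs_le {V b c e A t : ℝ} (hV : 0 ≤ V) (hc : 1 ≤ c)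
    (hb : |b| ≤ 2 * c * e ^ 2 * A + t) :
    V + b ^ 2 ≤ 8 * c ^ 2 * (V + e ^ 4 * A ^ 2 + t ^ 2) := by
  have hsq := (sq_le_sq' (neg_le_of_abs_le hb) (le_of_abs_le hb)).trans add_sq_le
  have hc2 : 1 ≤ c ^ 2 := one_le_pow₀ hc
  nlinarith [mul_le_mul_of_nonneg_right hc2 hV, mul_le_mul_of_nonneg_right hc2 (sq_nonneg t)]

section Moments

variable {Ω : Type*} [MeasurableSpace Ω] {P : Measure Ω} {f : Ω → ℝ}

lemma integrable_of_lintegral_ofReal_le (hf : AEStronglyMeasurable f P) (hf₀ : 0 ≤ᵐ[P] f)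
    {c : ℝ} (h : ∫⁻ ω, ENNReal.ofReal (f ω) ∂P ≤ ENNReal.ofReal c) : Integrable f P :=
  (lintegral_ofReal_ne_top_iff_integrable hf hf₀).1 (h.trans_lt ENNReal.ofReal_lt_top).ne

lemma integral_le_of_lintegral_ofReal_le (hf : AEStronglyMeasurable f P) (hf₀ : 0 ≤ᵐ[P] f)
    {c : ℝ} (hc : 0 ≤ c) (h : ∫⁻ ω, ENNReal.ofReal (f ω) ∂P ≤ ENNReal.ofReal c) :
    ∫ ω, f ω ∂P ≤ c := by
  rwa [← ENNReal.ofReal_le_ofReal_iff hc,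
    ofReal_integral_eq_lintegral_ofReal (integrable_of_lintegral_ofReal_le hf hf₀ h) hf₀]

lemma integrable_indicator_lt_rpow [IsFiniteMeasure P] {X : Ω → ℝ} (hX : Measurable X)
    (hX₀ : ∀ ω, 0 ≤ X ω) {T D : ℝ} (hT : 0 ≤ T) (hD : 0 ≤ D) :
    Integrable (fun ω => Set.indicator {y | y < T} (fun y => y ^ D) (X ω)) P := by
  refine .of_bound
    ((Measurable.indicator (by fun_prop) measurableSet_Iio).comp hX).aestronglyMeasurable (T ^ D)
    (ae_of_all _ fun ω => ?_)
  by_cases hXT : X ω < T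
  · rw [Set.indicator_of_mem (show X ω ∈ {y | y < T} from hXT), Real.norm_of_nonneg
      (Real.rpow_nonneg (hX₀ ω) D)]
    exact Real.rpow_le_rpow (hX₀ ω) hXT.le hD
  · rw [Set.indicator_of_notMem (show X ω ∉ {y | y < T} from hXT), norm_zero]
    exact Real.rpow_nonneg hT D

end Moments

section SampleMean

variable {Ω ι : Type*} [MeasurableSpace Ω] {P : Measure Ω} [IsProbabilityMeasure P]
  [Fintype ι] [Nonempty ι] {Y : ι → Ω → ℝ} {Z : Ω → ℝ}

lemma integral_sq_average_sub_eq (hZ : MemLp Z 2 P) (hid : ∀ i, IdentDistrib (Y i) Z P P)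
    (hY : Pairwise fun i j => IndepFun (Y i) (Y j) P) (m : ℝ) :
    ∫ ω, ((Fintype.card ι : ℝ)⁻¹ * ∑ i, Y i ω - m) ^ 2 ∂P
      = (Fintype.card ι : ℝ)⁻¹ * variance Z P + (∫ ω, Z ω ∂P - m) ^ 2 := by
  have hn : (Fintype.card ι : ℝ) ≠ 0 := by positivity
  have hYL2 : ∀ i, MemLp (Y i) 2 P := fun i => (hid i).memLp_iff.2 hZ
  set S : Ω → ℝ := fun ω => (Fintype.card ι : ℝ)⁻¹ * ∑ i, Y i ω
  have hS : MemLp S 2 P := (memLp_finsetSum _ fun i _ => hYL2 i).const_mul _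
  have hES : ∫ ω, S ω ∂P = ∫ ω, Z ω ∂P := by
    simp only [S, integral_const_mul,
      integral_finsetSum _ fun i _ => (hYL2 i).integrable one_le_two,
      fun i => (hid i).integral_eq, Finset.sum_const, Finset.card_univ, nsmul_eq_mul]
    field_simp
  have hVS : variance S P = (Fintype.card ι : ℝ)⁻¹ * variance Z P := by
    have : S = (Fintype.card ι : ℝ)⁻¹ • ∑ i, Y i := by ext ω; simp [S, Finset.sum_apply]
    rw [this, variance_smul, IndepFun.variance_sum (fun i _ => hYL2 i) fun i _ j _ hij => hY hij]
    simp only [fun i => (hid i).variance_eq, Finset.sum_const, Finset.card_univ, nsmul_eq_mul]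
    field_simp
  have hSm : MemLp (fun ω => S ω - m) 2 P := hS.sub (memLp_const m)
  have hdecomp := variance_eq_sub hSm
  rw [variance_sub_const hS.aestronglyMeasurable, hVS, integral_sub (hS.integrable one_le_two)
    (integrable_const m), hES] at hdecomp
  simp only [integral_const, probReal_univ, smul_eq_mul, one_mul, Pi.pow_apply] at hdecomp
  linarith

end SampleMean

section Truncation

variable {d : ℕ} {ε δ : ℝ}

lemma cast_sub_two_pos (hd : 3 ≤ d) : (0 : ℝ) < (d : ℝ) - 2 := by
  have : (3 : ℝ) ≤ d := by exact_mod_cast hd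
  linarith

lemma sq_mul_Ttrunc_rpow (hd : 3 ≤ d) (hε : 0 < ε) :
    ε ^ 2 * Ttrunc d ε δ ^ ((d : ℝ) - 2) = ε ^ (((d : ℝ) - 2) * δ) := by
  have hD := (cast_sub_two_pos hd).ne'
  rw [Ttrunc, ← Real.rpow_mul hε.le, ← Real.rpow_natCast, ← Real.rpow_add hε]
  congr 1
  field_simp
  push_cast
  ring

lemma Ttrunc_rpow_neg (hε : 0 < ε) (β : ℝ) :
    Ttrunc d ε δ ^ (-β) = ε ^ ((2 / ((d : ℝ) - 2) - δ) * β) := by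
  rw [Ttrunc, ← Real.rpow_mul hε.le]
  ring_nf

lemma Yind_of_lt {x : ℝ} (hxT : x < Ttrunc d ε δ) :
    Yind d ε δ x = x ^ ((d : ℝ) - 2) / (1 - 4 ^ ((d : ℝ) - 2) * ε ^ 2 * x ^ ((d : ℝ) - 2)) :=
  Set.indicator_of_mem (show x ∈ {y | y < Ttrunc d ε δ} from hxT) _

lemma Yind_of_le {x : ℝ} (hTx : Ttrunc d ε δ ≤ x) : Yind d ε δ x = 0 :=
  Set.indicator_of_notMem (show x ∉ {y | y < Ttrunc d ε δ} from hTx.not_gt) _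

lemma measurable_Yind : Measurable (Yind d ε δ) :=
  Measurable.indicator (by fun_prop) measurableSet_Iio

lemma four_rpow_mul_sq_mul_rpow_le_half (hd : 3 ≤ d) (hε : 0 < ε)
    (hsmall : (4 : ℝ) ^ ((d : ℝ) - 2) * ε ^ (((d : ℝ) - 2) * δ) ≤ 1 / 2)
    {x : ℝ} (hx : 0 ≤ x) (hxT : x < Ttrunc d ε δ) :
    4 ^ ((d : ℝ) - 2) * ε ^ 2 * x ^ ((d : ℝ) - 2) ≤ 1 / 2 := by
  have hD := (cast_sub_two_pos hd).le
  calc 4 ^ ((d : ℝ) - 2) * ε ^ 2 * x ^ ((d : ℝ) - 2)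
      ≤ 4 ^ ((d : ℝ) - 2) * (ε ^ 2 * Ttrunc d ε δ ^ ((d : ℝ) - 2)) := by
        rw [mul_assoc]
        gcongr
    _ ≤ 1 / 2 := by rwa [sq_mul_Ttrunc_rpow hd hε]

lemma Yind_nonneg (hd : 3 ≤ d) (hε : 0 < ε)
    (hsmall : (4 : ℝ) ^ ((d : ℝ) - 2) * ε ^ (((d : ℝ) - 2) * δ) ≤ 1 / 2)
    {x : ℝ} (hx : 0 ≤ x) : 0 ≤ Yind d ε δ x := by
  rcases lt_or_ge x (Ttrunc d ε δ) with hxT | hTx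
  · rw [Yind_of_lt hxT]
    have := four_rpow_mul_sq_mul_rpow_le_half hd hε hsmall hx hxT
    exact div_nonneg (Real.rpow_nonneg hx _) (by linarith)
  · rw [Yind_of_le hTx]

lemma Yind_le (hd : 3 ≤ d) (hε : 0 < ε)
    (hsmall : (4 : ℝ) ^ ((d : ℝ) - 2) * ε ^ (((d : ℝ) - 2) * δ) ≤ 1 / 2)
    {x : ℝ} (hx : 0 ≤ x) : Yind d ε δ x ≤ 2 * Ttrunc d ε δ ^ ((d : ℝ) - 2) := by
  rcases lt_or_ge x (Ttrunc d ε δ) with hxT | hTx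
  · have hD := (cast_sub_two_pos hd).le
    rw [Yind_of_lt hxT]
    calc _ ≤ 2 * x ^ ((d : ℝ) - 2) :=
          div_one_sub_le_two_mul (Real.rpow_nonneg hx _)
            (four_rpow_mul_sq_mul_rpow_le_half hd hε hsmall hx hxT)
      _ ≤ 2 * Ttrunc d ε δ ^ ((d : ℝ) - 2) := by gcongr
  · rw [Yind_of_le hTx]
    exact mul_nonneg zero_le_two (Real.rpow_nonneg (Real.rpow_nonneg hε.le _) _)

lemma abs_Yind_sub_rpow_le (hd : 3 ≤ d) (hε : 0 < ε)
    (hsmall : (4 : ℝ) ^ ((d : ℝ) - 2) * ε ^ (((d : ℝ) - 2) * δ) ≤ 1 / 2)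
    {x : ℝ} (hx : 0 ≤ x) :
    |Yind d ε δ x - x ^ ((d : ℝ) - 2)| ≤
      2 * 4 ^ ((d : ℝ) - 2) * ε ^ 2 *
        Set.indicator {y | y < Ttrunc d ε δ} (fun y => y ^ (2 * ((d : ℝ) - 2))) x
      + Set.indicator {y | Ttrunc d ε δ ≤ y} (fun y => y ^ ((d : ℝ) - 2)) x := by
  rcases lt_or_ge x (Ttrunc d ε δ) with hxT | hTx
  · rw [Yind_of_lt hxT, Set.indicator_of_mem (show x ∈ {y | y < Ttrunc d ε δ} from hxT),
      Set.indicator_of_notMem (show x ∉ {y | Ttrunc d ε δ ≤ y} from hxT.not_ge), add_zero,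
      mul_comm 2 ((d : ℝ) - 2), Real.rpow_mul hx, Real.rpow_two]
    convert abs_div_one_sub_sub_le (Real.rpow_nonneg hx _) (by positivity)
      (four_rpow_mul_sq_mul_rpow_le_half hd hε hsmall hx hxT) using 1
    ring
  · rw [Yind_of_le hTx, Set.indicator_of_notMem (show x ∉ {y | y < Ttrunc d ε δ} from hTx.not_gt),
      Set.indicator_of_mem (show x ∈ {y | Ttrunc d ε δ ≤ y} from hTx), zero_sub, abs_neg,
      abs_of_nonneg (Real.rpow_nonneg hx _), mul_zero, zero_add]

end Truncation

section RandomMark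

variable {Ω : Type*} [MeasurableSpace Ω] {P : Measure Ω} {d : ℕ} {ε δ : ℝ} {X : Ω → ℝ}

lemma memLp_Yind_comp [IsFiniteMeasure P] (hd : 3 ≤ d) (hε : 0 < ε)
    (hsmall : (4 : ℝ) ^ ((d : ℝ) - 2) * ε ^ (((d : ℝ) - 2) * δ) ≤ 1 / 2)
    (hX : Measurable X) (hX₀ : ∀ ω, 0 ≤ X ω) (p : ENNReal) :
    MemLp (fun ω => Yind d ε δ (X ω)) p P :=
  .of_bound (measurable_Yind.comp hX).aestronglyMeasurable _ (ae_of_all _ fun ω => by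
    rw [Real.norm_of_nonneg (Yind_nonneg hd hε hsmall (hX₀ ω))]
    exact Yind_le hd hε hsmall (hX₀ ω))

lemma abs_integral_Yind_sub_le [IsProbabilityMeasure P] (hd : 3 ≤ d) (hε : 0 < ε)
    (hsmall : (4 : ℝ) ^ ((d : ℝ) - 2) * ε ^ (((d : ℝ) - 2) * δ) ≤ 1 / 2)
    (hX : Measurable X) (hX₀ : ∀ ω, 0 ≤ X ω) {β : ℝ} (hβ : 0 ≤ β)
    (hmom : ∫⁻ ω, ENNReal.ofReal (X ω ^ ((d : ℝ) - 2 + β)) ∂P ≤ 1) :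
    |∫ ω, Yind d ε δ (X ω) ∂P - ∫ ω, X ω ^ ((d : ℝ) - 2) ∂P| ≤
      2 * 4 ^ ((d : ℝ) - 2) * ε ^ 2 *
        ∫ ω, Set.indicator {y | y < Ttrunc d ε δ} (fun y => y ^ (2 * ((d : ℝ) - 2))) (X ω) ∂P
      + ε ^ ((2 / ((d : ℝ) - 2) - δ) * β) := by
  have hD := (cast_sub_two_pos hd).le
  have hT : 0 < Ttrunc d ε δ := Real.rpow_pos_of_pos hε _
  have hmom' : ∫⁻ ω, ENNReal.ofReal (X ω ^ ((d : ℝ) - 2 + β)) ∂P ≤ ENNReal.ofReal 1 := by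
    rwa [ENNReal.ofReal_one]
  have hmeas : AEStronglyMeasurable (fun ω => X ω ^ ((d : ℝ) - 2 + β)) P :=
    (hX.pow_const _).aestronglyMeasurable
  have hpos : 0 ≤ᵐ[P] fun ω => X ω ^ ((d : ℝ) - 2 + β) :=
    ae_of_all _ fun ω => Real.rpow_nonneg (hX₀ ω) _
  have hint := integrable_of_lintegral_ofReal_le hmeas hpos hmom'
  have hintD : Integrable (fun ω => X ω ^ ((d : ℝ) - 2)) P :=
    ((integrable_const 1).add hint).mono' (hX.pow_const _).aestronglyMeasurable
      (ae_of_all _ fun ω => by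
        rw [Real.norm_of_nonneg (Real.rpow_nonneg (hX₀ ω) _)]
        exact rpow_le_one_add_rpow_add (hX₀ ω) hD hβ)
  have hintI := integrable_indicator_lt_rpow hX hX₀ hT.le (mul_nonneg zero_le_two hD) (P := P)
  calc _ = |∫ ω, (Yind d ε δ (X ω) - X ω ^ ((d : ℝ) - 2)) ∂P| := by
        rw [integral_sub ((memLp_Yind_comp hd hε hsmall hX hX₀ 1).integrable le_rfl) hintD]
    _ ≤ ∫ ω, |Yind d ε δ (X ω) - X ω ^ ((d : ℝ) - 2)| ∂P := abs_integral_le_integral_abs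
    _ ≤ ∫ ω, (2 * 4 ^ ((d : ℝ) - 2) * ε ^ 2 *
          Set.indicator {y | y < Ttrunc d ε δ} (fun y => y ^ (2 * ((d : ℝ) - 2))) (X ω)
          + Ttrunc d ε δ ^ (-β) * X ω ^ ((d : ℝ) - 2 + β)) ∂P :=
        integral_mono_of_nonneg (ae_of_all _ fun ω => abs_nonneg _)
          ((hintI.const_mul _).add (hint.const_mul _)) (ae_of_all _ fun ω =>
            (abs_Yind_sub_rpow_le hd hε hsmall (hX₀ ω)).trans
              (add_le_add le_rfl (indicator_le_rpow_neg_mul_rpow_add hT (hX₀ ω) hβ)))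
    _ ≤ _ := by
      rw [integral_add (hintI.const_mul _) (hint.const_mul _), integral_const_mul,
        integral_const_mul, ← Ttrunc_rpow_neg hε]
      gcongr
      exact mul_le_of_le_one_right (Real.rpow_nonneg hT.le _)
        (integral_le_of_lintegral_ofReal_le hmeas hpos zero_le_one hmom')

end RandomMark

/-- variance-type bound for the averaged truncated marks over a cube of
side `k` in `ℤ^d`, with `C = C(d)`. -/
theorem averaged_marks_second_moment (d : ℕ) (hd : 3 ≤ d) :
    ∃ C > 0, ∀ (δ β ε : ℝ) (k : ℕ),
      δ ∈ Set.Ioc (0 : ℝ) (2 / ((d : ℝ) - 2)) → 0 < β →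
      ε ∈ Set.Ioo (0 : ℝ) 1 →
      (4 : ℝ) ^ ((d : ℝ) - 2) * ε ^ (((d : ℝ) - 2) * δ) ≤ 1 / 2 →
      1 ≤ k →
      ∀ (Ω : Type) (_ : MeasurableSpace Ω) (P : Measure Ω), IsProbabilityMeasure P →
      ∀ (ρ : (Fin d → ℤ) → Ω → ℝ),
        (∀ z, Measurable (ρ z)) →
        (∀ z ω, 0 ≤ ρ z ω) →
        iIndepFun ρ P →
        (∀ z, IdentDistrib (ρ z) (ρ 0) P P) →
        (∫⁻ ω, ENNReal.ofReal (ρ 0 ω ^ ((d : ℝ) - 2 + β)) ∂P ≤ 1) →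
        ∫ ω, ((k : ℝ) ^ (-(d : ℝ)) *
                (∑ v : Fin d → Fin k, Yind d ε δ (ρ (fun i => ((v i : ℕ) : ℤ)) ω))
              - ∫ ω', ρ 0 ω' ^ ((d : ℝ) - 2) ∂P) ^ 2 ∂P
          ≤ C * ((k : ℝ) ^ (-(d : ℝ)) * variance (fun ω => Yind d ε δ (ρ 0 ω)) P
              + ε ^ 4 * (∫ ω, Set.indicator {x | x < Ttrunc d ε δ}
                  (fun x => x ^ (2 * ((d : ℝ) - 2))) (ρ 0 ω) ∂P) ^ 2
              + ε ^ (2 * (2 / ((d : ℝ) - 2) - δ) * β)) := by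
  refine ⟨8 * (4 ^ ((d : ℝ) - 2)) ^ 2, by positivity, ?_⟩
  intro δ β ε k _ hβ hε hsmall hk Ω _ P _ ρ hmeas hpos hindep hident hmom
  have : Nonempty (Fin d → Fin k) := ⟨fun _ => ⟨0, hk⟩⟩
  have hcard : (k : ℝ) ^ (-(d : ℝ)) = (Fintype.card (Fin d → Fin k) : ℝ)⁻¹ := by
    rw [Real.rpow_neg (Nat.cast_nonneg k), Real.rpow_natCast]
    simp
  have hinj : Function.Injective fun (v : Fin d → Fin k) (i : Fin d) => ((v i : ℕ) : ℤ) :=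
    fun u v huv => funext fun i => Fin.val_injective (Nat.cast_inj.1 (congrFun huv i))
  have hmean := integral_sq_average_sub_eq
    (Y := fun (v : Fin d → Fin k) ω => Yind d ε δ (ρ (fun i => ((v i : ℕ) : ℤ)) ω))
    (memLp_Yind_comp hd hε.1 hsmall (hmeas 0) (hpos 0) 2)
    (fun v => (hident _).comp measurable_Yind)
    (fun u v huv => (hindep.indepFun (hinj.ne huv)).comp measurable_Yind measurable_Yind)
  have ht2 : ε ^ (2 * (2 / ((d : ℝ) - 2) - δ) * β) = (ε ^ ((2 / ((d : ℝ) - 2) - δ) * β)) ^ 2 := by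
    rw [← Real.rpow_natCast, ← Real.rpow_mul hε.1.le]
    ring_nf
  rw [hcard, hmean, ← hcard, ht2]
  exact add_sq_le_eight_mul_of_abs_le (mul_nonneg (by positivity) (variance_nonneg _ _))
    (Real.one_le_rpow (by norm_num) (cast_sub_two_pos hd).le)
    (abs_integral_Yind_sub_le hd hε.1 hsmall (hmeas 0) (hpos 0) hβ.le hmom)
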